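/- Let $1<q<\infty$, $0<\lambda<1/n$, $b\in LC_{q,\lambda}^{\{x_0\}}$, $1<p<\infty$, $f\in L^{p}_{loc}$, $r>0$ and $B=B(x_0,r)$. Then for all $t\ge 2r$, $\int_{B(x_0,t)}|b(y)-b_{B}|\,|f(y)|\,dy \le C\,\|b\|_{LC_{q,\lambda}^{\{x_0\}}}\big(1+\ln\tfrac{t}{r}\big)\,t^{\,n\lambda-n/p+n}\,\|f\|_{L^{p}(B(x_0,t))}$, where $1/p+1/q\le 1$ and $C$ is independent of $b,f,r,t$. -/

import Mathlib

open MeasureTheory Metric Set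
open scoped ENNReal NNReal

section Aux
variable {α : Type*} [MeasurableSpace α] {μ : Measure α}

lemma aux_aesm_rpow {g : α → ℝ} (hgm : AEStronglyMeasurable g μ) {e : ℝ} (he : 0 < e) :
    AEStronglyMeasurable (fun x => g x ^ e) μ := by
  have hcont : Continuous fun x : ℝ => x ^ e :=
    continuous_iff_continuousAt.2 fun x => Real.continuousAt_rpow_const x e (Or.inr he.le)
  exact hcont.comp_aestronglyMeasurable hgm

lemma aux_memLp_of_integrable_rpow {r : ℝ} (hr : 1 ≤ r) {g : α → ℝ}
    (hg0 : ∀ x, 0 ≤ g x) (hgm : AEStronglyMeasurable g μ)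
    (hgi : Integrable (fun x => g x ^ r) μ) : MemLp g (ENNReal.ofReal r) μ := by
  have hr0 : (0:ℝ) < r := lt_of_lt_of_le zero_lt_one hr
  have hne : ENNReal.ofReal r ≠ 0 := by
    simp only [ne_eq, ENNReal.ofReal_eq_zero, not_le]; linarith
  have hnt : ENNReal.ofReal r ≠ ∞ := ENNReal.ofReal_ne_top
  have h1 : (ENNReal.ofReal r) / (ENNReal.ofReal r) = 1 := ENNReal.div_self hne hnt
  have hiff := memLp_norm_rpow_iff (p := ENNReal.ofReal r) (q := ENNReal.ofReal r) hgm hne hnt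
  rw [h1, ENNReal.toReal_ofReal hr0.le] at hiff
  refine hiff.1 ?_
  rw [memLp_one_iff_integrable]
  refine hgi.congr (Filter.Eventually.of_forall fun x => ?_)
  show g x ^ r = ‖g x‖ ^ r
  rw [Real.norm_of_nonneg (hg0 x)]

lemma aux_holder {s s' : ℝ} (hss' : s.HolderConjugate s') {g h : α → ℝ}
    (hg0 : ∀ x, 0 ≤ g x) (hh0 : ∀ x, 0 ≤ h x)
    (hgm : AEStronglyMeasurable g μ) (hhm : AEStronglyMeasurable h μ)
    (hgi : Integrable (fun x => g x ^ s) μ) (hhi : Integrable (fun x => h x ^ s') μ) :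
    ∫ x, g x * h x ∂μ ≤ (∫ x, g x ^ s ∂μ) ^ (1/s) * (∫ x, h x ^ s' ∂μ) ^ (1/s') :=
  integral_mul_le_Lp_mul_Lq_of_nonneg hss' (Filter.Eventually.of_forall hg0)
    (Filter.Eventually.of_forall hh0)
    (aux_memLp_of_integrable_rpow hss'.lt.le hg0 hgm hgi)
    (aux_memLp_of_integrable_rpow hss'.symm.lt.le hh0 hhm hhi)

lemma aux_power_mean [IsFiniteMeasure μ] {a c : ℝ} (ha : 1 ≤ a) (hac : a ≤ c) {g : α → ℝ}
    (hg0 : ∀ x, 0 ≤ g x) (hgm : AEStronglyMeasurable g μ)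
    (hgc : Integrable (fun x => g x ^ c) μ) :
    ∫ x, g x ^ a ∂μ ≤ (∫ x, g x ^ c ∂μ) ^ (a/c) * ((μ univ).toReal) ^ (1 - a/c) := by
  have ha0 : (0:ℝ) < a := lt_of_lt_of_le zero_lt_one ha
  have hc0 : (0:ℝ) < c := lt_of_lt_of_le zero_lt_one (ha.trans hac)
  rcases eq_or_lt_of_le hac with rfl | hlt
  · rw [div_self hc0.ne', Real.rpow_one, sub_self, Real.rpow_zero, mul_one]
  · have hs1 : 1 < c / a := (one_lt_div ha0).2 hlt
    have hconj := Real.HolderConjugate.conjExponent hs1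
    set s' := Real.conjExponent (c/a) with hs'
    have hgam : AEStronglyMeasurable (fun x => g x ^ a) μ := aux_aesm_rpow hgm ha0
    have hpow : ∀ x, (g x ^ a) ^ (c/a) = g x ^ c := by
      intro x
      rw [← Real.rpow_mul (hg0 x)]
      congr 1
      field_simp
    have hgi2 : Integrable (fun x => (g x ^ a) ^ (c/a)) μ := by
      exact hgc.congr (Filter.Eventually.of_forall fun x => (hpow x).symm)
    have h1i : Integrable (fun _ : α => (1:ℝ) ^ s') μ := by
      simp only [Real.one_rpow]; exact integrable_const 1
    have key := aux_holder hconj (fun x => Real.rpow_nonneg (hg0 x) a)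
      (fun _ => zero_le_one) hgam aestronglyMeasurable_const hgi2 h1i
    simp only [mul_one, Real.one_rpow] at key
    rw [integral_const, smul_eq_mul, mul_one] at key
    have e1 : 1 / (c/a) = a / c := one_div_div _ _
    have e2 : 1 / s' = 1 - a / c := by
      have h := hconj.inv_add_inv_eq_one
      rw [inv_div] at h
      rw [one_div]
      linarith
    rw [e1, e2] at key
    calc ∫ x, g x ^ a ∂μ ≤ (∫ x, (g x ^ a) ^ (c/a) ∂μ) ^ (a/c) * ((μ univ).toReal) ^ (1 - a/c) := key
      _ = (∫ x, g x ^ c ∂μ) ^ (a/c) * ((μ univ).toReal) ^ (1 - a/c) := by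
          rw [integral_congr_ae (Filter.Eventually.of_forall fun x => hpow x)]

lemma aux_rpow_add_le {x y e : ℝ} (hx : 0 ≤ x) (hy : 0 ≤ y) (he : 0 ≤ e) :
    (x + y) ^ e ≤ 2 ^ e * (x ^ e + y ^ e) := by
  have hm : 0 ≤ max x y := le_trans hx (le_max_left _ _)
  calc (x + y) ^ e ≤ (2 * max x y) ^ e := by
        refine Real.rpow_le_rpow (by positivity) ?_ he
        rcases max_cases x y with ⟨h1, h2⟩ | ⟨h1, h2⟩ <;> rw [h1] <;> linarith
    _ = 2 ^ e * (max x y) ^ e := Real.mul_rpow (by norm_num) hm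
    _ ≤ 2 ^ e * (x ^ e + y ^ e) := by
        refine mul_le_mul_of_nonneg_left ?_ (by positivity)
        rcases max_cases x y with ⟨h1, _⟩ | ⟨h1, _⟩ <;> rw [h1]
        · nlinarith [Real.rpow_nonneg hy e]
        · nlinarith [Real.rpow_nonneg hx e]

lemma aux_rpow_le_one_add {x a c : ℝ} (hx : 0 ≤ x) (ha : 0 ≤ a) (hac : a ≤ c) :
    x ^ a ≤ 1 + x ^ c := by
  rcases le_or_gt x 1 with h1 | h1
  · have : x ^ a ≤ 1 := Real.rpow_le_one hx h1 ha
    nlinarith [Real.rpow_nonneg hx c]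
  · have : x ^ a ≤ x ^ c := Real.rpow_le_rpow_of_exponent_le h1.le hac
    nlinarith
end Aux

set_option maxHeartbeats 1000000 in
/-- Estimate (4.12)-type bound: `∫_{B(x₀,t)} |b - b_{B(x₀,r)}| |f| ≤
C ‖b‖_{LC_{q,λ}^{x₀}} (1 + ln(t/r)) t^{nλ - n/p + n} ‖f‖_{L^p(B(x₀,t))}`
for `t ≥ 2r`. -/
theorem stmt11 (n : ℕ) (hn : 0 < n) (x₀ : EuclideanSpace ℝ (Fin n))
    (q lam p : ℝ) (hq : 1 < q) (hlam0 : 0 < lam) (hlam : lam < 1 / n)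
    (hp : 1 < p) (hpq : 1 / p + 1 / q ≤ 1) :
    ∃ C > 0, ∀ (b : EuclideanSpace ℝ (Fin n) → ℝ) (Nb : ℝ)
      (f : EuclideanSpace ℝ (Fin n) → ℝ) (r t : ℝ), 0 < r → 2 * r ≤ t →
      (∀ ρ > 0, IntegrableOn (fun y => |b y| ^ q) (ball x₀ ρ)) →
      (∀ ρ > 0,
        (((volume (ball x₀ ρ)).toReal ^ (1 + lam * q))⁻¹ *
            ∫ y in ball x₀ ρ, |b y - ⨍ z in ball x₀ ρ, b z| ^ q) ^ (1 / q) ≤ Nb) →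
      (∀ ρ > 0, IntegrableOn (fun y => |f y| ^ p) (ball x₀ ρ)) →
      (∫ y in ball x₀ t, |b y - ⨍ z in ball x₀ r, b z| * |f y|) ≤
        C * Nb * (1 + Real.log (t / r)) *
          t ^ ((n : ℝ) * lam - (n : ℝ) / p + n) *
          (∫ y in ball x₀ t, |f y| ^ p) ^ (1 / p) := by
  have hq0 : (0:ℝ) < q := lt_trans zero_lt_one hq
  have hp0 : (0:ℝ) < p := lt_trans zero_lt_one hp
  have hlog2 : 0 < Real.log 2 := Real.log_pos (by norm_num)
  have hlog2le : Real.log 2 ≤ 1 := by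
    have := Real.log_le_sub_one_of_pos (show (0:ℝ) < 2 by norm_num)
    linarith
  set cE : ℝ := (volume (ball (0 : EuclideanSpace ℝ (Fin n)) 1)).toReal with hcE_def
  have hcE : 0 < cE :=
    ENNReal.toReal_pos (measure_ball_pos volume 0 one_pos).ne' measure_ball_lt_top.ne
  set e : ℝ := 1 + lam - 1/p with he_def
  refine ⟨cE ^ e * (1 + 2 ^ n / Real.log 2),
    mul_pos (Real.rpow_pos_of_pos hcE e)
      (add_pos one_pos (div_pos (by positivity) hlog2)), ?_⟩
  intro b Nb f r t hr htr hb1 hb2 hf1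
  have ht : (0:ℝ) < t := lt_of_lt_of_le (by linarith) htr
  have hrt : r ≤ t := by linarith
  set A : ℝ → ℝ := fun u => ⨍ z in ball x₀ u, b z with hA_def
  set V : ℝ → ℝ := fun u => (volume (ball x₀ u)).toReal with hV_def
  have hfin : ∀ u : ℝ, IsFiniteMeasure (volume.restrict (ball x₀ u)) := fun u =>
    ⟨by rw [Measure.restrict_apply_univ]; exact measure_ball_lt_top⟩
  have hV0 : ∀ u : ℝ, 0 < u → 0 < V u := fun u hu =>
    ENNReal.toReal_pos (measure_ball_pos volume x₀ hu).ne' measure_ball_lt_top.ne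
  have hVnn : ∀ u : ℝ, 0 ≤ V u := fun u => ENNReal.toReal_nonneg
  have hVmono : ∀ s u : ℝ, s ≤ u → V s ≤ V u := fun s u hsu =>
    ENNReal.toReal_mono measure_ball_lt_top.ne (measure_mono (ball_subset_ball hsu))
  have hVf : ∀ u : ℝ, 0 < u → V u = u ^ n * cE := by
    intro u hu
    show (volume (ball x₀ u)).toReal = _
    rw [Measure.addHaar_ball_of_pos volume x₀ hu, ENNReal.toReal_mul,
      ENNReal.toReal_ofReal (by positivity), finrank_euclideanSpace_fin]
  have hb2' : ∀ u : ℝ, 0 < u →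
      ((V u ^ (1 + lam * q))⁻¹ * ∫ y in ball x₀ u, |b y - A u| ^ q) ^ (1 / q) ≤ Nb := hb2
  have hNb : 0 ≤ Nb := by
    refine le_trans ?_ (hb2' 1 one_pos)
    refine Real.rpow_nonneg (mul_nonneg (inv_nonneg.2 (Real.rpow_nonneg (hVnn 1) _)) ?_) _
    exact integral_nonneg fun y => Real.rpow_nonneg (abs_nonneg _) q
  have hAzero : ∀ u : ℝ, ¬ IntegrableOn b (ball x₀ u) volume → A u = 0 := by
    intro u hbi
    show ⨍ z in ball x₀ u, b z = 0
    rw [setAverage_eq, integral_undef hbi, smul_zero]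
  have habs_aesm : ∀ u : ℝ, IntegrableOn b (ball x₀ u) volume →
      AEStronglyMeasurable (fun y => |b y - A u|) (volume.restrict (ball x₀ u)) := by
    intro u hbi
    have h1 := (hbi.aestronglyMeasurable.sub (aestronglyMeasurable_const (b := A u))).norm
    simpa only [Real.norm_eq_abs, Pi.sub_apply] using h1
  have htriangle : ∀ y : EuclideanSpace ℝ (Fin n), ∀ c : ℝ, |b y - c| ≤ |b y| + |c| := by
    intro y c
    calc |b y - c| = |b y + -c| := by rw [sub_eq_add_neg]
      _ ≤ |b y| + |-c| := abs_add_le _ _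
      _ = |b y| + |c| := by rw [abs_neg]
  have hGi : ∀ u : ℝ, 0 < u → IntegrableOn (fun y => |b y - A u| ^ q) (ball x₀ u) volume := by
    intro u hu
    by_cases hbi : IntegrableOn b (ball x₀ u) volume
    · have hm : AEStronglyMeasurable (fun y => |b y - A u| ^ q)
          (volume.restrict (ball x₀ u)) := aux_aesm_rpow (habs_aesm u hbi) hq0
      refine Integrable.mono' (g := fun y => 2 ^ q * (|b y| ^ q + |A u| ^ q)) ?_ hm
        (Filter.Eventually.of_forall fun y => ?_)
      · exact ((hb1 u hu).add (integrableOn_const measure_ball_lt_top.ne)).const_mul _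
      · rw [Real.norm_of_nonneg (Real.rpow_nonneg (abs_nonneg _) q)]
        calc |b y - A u| ^ q ≤ (|b y| + |A u|) ^ q :=
              Real.rpow_le_rpow (abs_nonneg _) (htriangle y (A u)) hq0.le
          _ ≤ 2 ^ q * (|b y| ^ q + |A u| ^ q) :=
              aux_rpow_add_le (abs_nonneg _) (abs_nonneg _) hq0.le
    · have h0 := hAzero u hbi
      simp only [h0, sub_zero]
      exact hb1 u hu
  have hGm : ∀ u : ℝ, 0 < u →
      AEStronglyMeasurable (fun y => |b y - A u|) (volume.restrict (ball x₀ u)) := by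
    intro u hu
    have h1 := aux_aesm_rpow (hGi u hu).aestronglyMeasurable (show (0:ℝ) < 1/q by positivity)
    refine h1.congr (Filter.Eventually.of_forall fun y => ?_)
    show (|b y - A u| ^ q) ^ (1/q) = |b y - A u|
    rw [← Real.rpow_mul (abs_nonneg _), mul_one_div, div_self hq0.ne', Real.rpow_one]
  have hG1 : ∀ u : ℝ, 0 < u → IntegrableOn (fun y => |b y - A u|) (ball x₀ u) volume := by
    intro u hu
    refine Integrable.mono' (g := fun y => 1 + |b y - A u| ^ q)
      ((integrableOn_const measure_ball_lt_top.ne).add (hGi u hu)) (hGm u hu)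
      (Filter.Eventually.of_forall fun y => ?_)
    rw [Real.norm_of_nonneg (abs_nonneg _)]
    have := aux_rpow_le_one_add (abs_nonneg (b y - A u)) zero_le_one hq.le
    simpa [Real.rpow_one] using this
  have hCamp : ∀ u : ℝ, 0 < u →
      (∫ y in ball x₀ u, |b y - A u| ^ q) ≤ Nb ^ q * V u ^ (1 + lam * q) := by
    intro u hu
    have hVq : 0 < V u ^ (1 + lam * q) := Real.rpow_pos_of_pos (hV0 u hu) _
    have hI0 : 0 ≤ ∫ y in ball x₀ u, |b y - A u| ^ q :=
      integral_nonneg fun y => Real.rpow_nonneg (abs_nonneg _) q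
    have hX0 : 0 ≤ (V u ^ (1 + lam * q))⁻¹ * ∫ y in ball x₀ u, |b y - A u| ^ q :=
      mul_nonneg (inv_nonneg.2 hVq.le) hI0
    have h3 := Real.rpow_le_rpow (Real.rpow_nonneg hX0 _) (hb2' u hu) hq0.le
    rw [← Real.rpow_mul hX0, one_div_mul_cancel hq0.ne', Real.rpow_one] at h3
    rw [inv_mul_le_iff₀ hVq] at h3
    calc (∫ y in ball x₀ u, |b y - A u| ^ q) ≤ V u ^ (1 + lam * q) * Nb ^ q := h3
      _ = Nb ^ q * V u ^ (1 + lam * q) := mul_comm _ _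
  have hL1 : ∀ u : ℝ, 0 < u →
      (∫ y in ball x₀ u, |b y - A u|) ≤ Nb * V u ^ (1 + lam) := by
    intro u hu
    haveI := hfin u
    have hpm := aux_power_mean (μ := volume.restrict (ball x₀ u)) (a := 1) (c := q) le_rfl hq.le
      (g := fun y => |b y - A u|) (fun y => abs_nonneg _) (hGm u hu) (hGi u hu)
    rw [Measure.restrict_apply_univ] at hpm
    simp only [Real.rpow_one] at hpm
    have h1 : (∫ y in ball x₀ u, |b y - A u| ^ q) ^ (1/q)
        ≤ (Nb ^ q * V u ^ (1 + lam*q)) ^ (1/q) :=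
      Real.rpow_le_rpow (integral_nonneg fun y => Real.rpow_nonneg (abs_nonneg _) q)
        (hCamp u hu) (by positivity)
    have h2 : (Nb ^ q * V u ^ (1 + lam*q)) ^ (1/q) = Nb * V u ^ ((1 + lam*q)/q) := by
      rw [Real.mul_rpow (Real.rpow_nonneg hNb q) (Real.rpow_nonneg (hVnn u) _),
          ← Real.rpow_mul hNb, mul_one_div, div_self hq0.ne', Real.rpow_one,
          ← Real.rpow_mul (hVnn u), mul_one_div]
    have h3 : V u ^ ((1+lam*q)/q) * V u ^ (1 - 1/q) = V u ^ (1 + lam) := by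
      rw [← Real.rpow_add (hV0 u hu)]
      congr 1
      field_simp
      ring
    calc (∫ y in ball x₀ u, |b y - A u|)
        ≤ (∫ y in ball x₀ u, |b y - A u| ^ q) ^ ((1:ℝ)/q) * V u ^ (1 - (1:ℝ)/q) := hpm
      _ ≤ (Nb * V u ^ ((1+lam*q)/q)) * V u ^ (1 - 1/q) := by
          refine mul_le_mul_of_nonneg_right ?_ (Real.rpow_nonneg (hVnn u) _)
          rw [← h2]; exact h1
      _ = Nb * V u ^ (1 + lam) := by rw [mul_assoc, h3]
  have hid : ∀ s u : ℝ, 0 < s → s ≤ u →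
      A s - A u = ⨍ z in ball x₀ s, (b z - A u) := by
    intro s u hs hsu
    by_cases hbu : IntegrableOn b (ball x₀ u) volume
    · have hbs : IntegrableOn b (ball x₀ s) volume := hbu.mono_set (ball_subset_ball hsu)
      have hVs : (0:ℝ) < volume.real (ball x₀ s) := hV0 s hs
      show (⨍ z in ball x₀ s, b z) - A u = _
      rw [setAverage_eq, setAverage_eq,
        integral_sub hbs (integrableOn_const measure_ball_lt_top.ne),
        setIntegral_const]
      simp only [smul_eq_mul, mul_sub]
      rw [← mul_assoc, inv_mul_cancel₀ hVs.ne', one_mul]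
    · rw [hAzero u hbu]
      simp only [sub_zero]
      rfl
  have hDiff : ∀ s u : ℝ, 0 < s → s ≤ u →
      |A s - A u| ≤ (V s)⁻¹ * (Nb * V u ^ (1 + lam)) := by
    intro s u hs hsu
    have hu : 0 < u := lt_of_lt_of_le hs hsu
    rw [hid s u hs hsu, setAverage_eq, smul_eq_mul, abs_mul, abs_inv,
      abs_of_nonneg (measureReal_nonneg (μ := volume) (s := ball x₀ s))]
    refine mul_le_mul_of_nonneg_left ?_ (inv_nonneg.2 (hVnn s))
    calc |∫ z in ball x₀ s, (b z - A u)| ≤ ∫ z in ball x₀ s, |b z - A u| := by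
          simpa [Real.norm_eq_abs] using
            norm_integral_le_integral_norm (μ := volume.restrict (ball x₀ s))
              (fun z => b z - A u)
      _ ≤ ∫ z in ball x₀ u, |b z - A u| := by
          refine setIntegral_mono_set (hG1 u hu)
            (Filter.Eventually.of_forall fun z => abs_nonneg _) ?_
          exact HasSubset.Subset.eventuallyLE (ball_subset_ball hsu)
      _ ≤ Nb * V u ^ (1 + lam) := hL1 u hu
  have hStep : ∀ s u : ℝ, 0 < s → s ≤ u → u ≤ 2*s →
      |A s - A u| ≤ 2 ^ n * (Nb * V u ^ lam) := by
    intro s u hs hsu hu2s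
    have hu : 0 < u := lt_of_lt_of_le hs hsu
    refine (hDiff s u hs hsu).trans ?_
    have h1 : V u ^ (1 + lam) = V u * V u ^ lam := by
      rw [Real.rpow_add (hV0 u hu), Real.rpow_one]
    have h2 : (V s)⁻¹ * V u ≤ 2 ^ n := by
      rw [hVf u hu, hVf s hs]
      rw [inv_mul_le_iff₀ (by positivity)]
      have : u ^ n ≤ (2*s) ^ n := pow_le_pow_left₀ hu.le hu2s n
      calc u ^ n * cE ≤ (2*s)^n * cE := by
            exact mul_le_mul_of_nonneg_right this hcE.le
        _ = s ^ n * cE * 2 ^ n := by ring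
    calc (V s)⁻¹ * (Nb * V u ^ (1 + lam)) = ((V s)⁻¹ * V u) * (Nb * V u ^ lam) := by
          rw [h1]; ring
      _ ≤ 2 ^ n * (Nb * V u ^ lam) := by
          refine mul_le_mul_of_nonneg_right h2 ?_
          exact mul_nonneg hNb (Real.rpow_nonneg (hVnn u) _)
  have hVlam : ∀ u : ℝ, u ≤ t → V u ^ lam ≤ V t ^ lam := fun u hu =>
    Real.rpow_le_rpow (hVnn u) (hVmono u t hu) hlam0.le
  have hChain : ∀ K : ℕ, |A r - A (min ((2:ℝ)^K * r) t)|
      ≤ (K:ℝ) * (2 ^ n * (Nb * V t ^ lam)) := by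
    intro K
    induction K with
    | zero =>
      simp only [pow_zero, one_mul, min_eq_left hrt, Nat.cast_zero, zero_mul, sub_self, abs_zero]
      exact le_refl 0
    | succ K ih =>
      set s : ℝ := min ((2:ℝ)^K * r) t with hs_def
      set u : ℝ := min ((2:ℝ)^(K+1) * r) t with hu_def
      have hs0 : 0 < s := lt_min (by positivity) ht
      have hsu : s ≤ u := by
        refine min_le_min ?_ le_rfl
        have : (2:ℝ)^K ≤ 2^(K+1) := by
          apply pow_le_pow_right₀ (by norm_num)
          omega
        nlinarith
      have hu2s : u ≤ 2 * s := by
        rcases le_or_gt ((2:ℝ)^K * r) t with h | h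
        · have hseq : s = (2:ℝ)^K * r := min_eq_left h
          calc u ≤ (2:ℝ)^(K+1) * r := min_le_left _ _
            _ = 2 * s := by rw [hseq]; ring
        · have hseq : s = t := min_eq_right h.le
          calc u ≤ t := min_le_right _ _
            _ ≤ 2 * s := by rw [hseq]; linarith
      have hut : u ≤ t := min_le_right _ _
      calc |A r - A u| ≤ |A r - A s| + |A s - A u| := by
            have : A r - A u = (A r - A s) + (A s - A u) := by ring
            rw [this]; exact abs_add_le _ _
        _ ≤ (K:ℝ) * (2 ^ n * (Nb * V t ^ lam)) + 2 ^ n * (Nb * V u ^ lam) := by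
            refine add_le_add ih (hStep s u hs0 hsu hu2s)
        _ ≤ (K:ℝ) * (2 ^ n * (Nb * V t ^ lam)) + 2 ^ n * (Nb * V t ^ lam) := by
            refine add_le_add (le_refl _) ?_
            refine mul_le_mul_of_nonneg_left ?_ (by positivity)
            exact mul_le_mul_of_nonneg_left (hVlam u hut) hNb
        _ = ((K:ℝ)+1) * (2 ^ n * (Nb * V t ^ lam)) := by ring
        _ = ((K+1 : ℕ):ℝ) * (2 ^ n * (Nb * V t ^ lam)) := by push_cast; ring
  set K : ℕ := ⌈Real.logb 2 (t/r)⌉₊ with hK_def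
  have htr1 : (1:ℝ) ≤ t / r := by rw [le_div_iff₀ hr]; linarith
  have htr2 : (2:ℝ) ≤ t / r := by rw [le_div_iff₀ hr]; linarith
  have hlogb0 : 0 ≤ Real.logb 2 (t/r) := Real.logb_nonneg (by norm_num) htr1
  have hL0 : 0 ≤ Real.log (t/r) := Real.log_nonneg htr1
  have hKt : min ((2:ℝ)^K * r) t = t := by
    refine min_eq_right ?_
    have h1 : Real.logb 2 (t/r) ≤ (K:ℝ) := Nat.le_ceil _
    have h2 : t / r ≤ (2:ℝ) ^ (K:ℝ) := by
      calc t / r = (2:ℝ) ^ Real.logb 2 (t/r) :=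
            (Real.rpow_logb (by norm_num) (by norm_num) (by positivity)).symm
        _ ≤ (2:ℝ) ^ (K:ℝ) := Real.rpow_le_rpow_of_exponent_le (by norm_num) h1
    rw [Real.rpow_natCast] at h2
    rw [div_le_iff₀ hr] at h2
    linarith
  have hKle : (K:ℝ) ≤ (1 + Real.log (t/r)) / Real.log 2 := by
    have h1 : (K:ℝ) < Real.logb 2 (t/r) + 1 := Nat.ceil_lt_add_one hlogb0
    have h2 : Real.logb 2 (t/r) = Real.log (t/r) / Real.log 2 := rfl
    rw [h2] at h1
    have h3 : Real.log (t/r) / Real.log 2 + 1 ≤ (1 + Real.log (t/r)) / Real.log 2 := by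
      rw [div_add' _ _ _ hlog2.ne', div_le_div_iff₀ hlog2 hlog2]
      nlinarith
    linarith
  have hAtr : |A t - A r| ≤ (K:ℝ) * (2 ^ n * (Nb * V t ^ lam)) := by
    have h1 := hChain K
    rw [hKt] at h1
    rwa [abs_sub_comm]
  haveI := hfin t
  have hfp : IntegrableOn (fun y => |f y| ^ p) (ball x₀ t) volume := hf1 t ht
  have hfm : AEStronglyMeasurable (fun y => |f y|) (volume.restrict (ball x₀ t)) := by
    have h1 := aux_aesm_rpow hfp.aestronglyMeasurable (show (0:ℝ) < 1/p by positivity)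
    refine h1.congr (Filter.Eventually.of_forall fun y => ?_)
    show (|f y| ^ p) ^ (1/p) = |f y|
    rw [← Real.rpow_mul (abs_nonneg _), mul_one_div, div_self hp0.ne', Real.rpow_one]
  have hfI1 : IntegrableOn (fun y => |f y|) (ball x₀ t) volume := by
    refine Integrable.mono' (g := fun y => 1 + |f y| ^ p)
      ((integrableOn_const measure_ball_lt_top.ne).add hfp) hfm
      (Filter.Eventually.of_forall fun y => ?_)
    rw [Real.norm_of_nonneg (abs_nonneg _)]
    simpa [Real.rpow_one] using aux_rpow_le_one_add (abs_nonneg (f y)) zero_le_one hp.le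
  set q' : ℝ := Real.conjExponent q with hq'_def
  have hqq' : q.HolderConjugate q' := Real.HolderConjugate.conjExponent hq
  have hq'1 : 1 < q' := hqq'.symm.lt
  have hq'0 : (0:ℝ) < q' := lt_trans zero_lt_one hq'1
  have hq'inv : 1/q' = 1 - 1/q := by
    have h1 := hqq'.inv_add_inv_eq_one
    rw [one_div, one_div]
    linarith
  have hq'p : q' ≤ p := by
    have h2 : 1/p ≤ 1/q' := by rw [hq'inv]; linarith
    rw [div_le_div_iff₀ hp0 hq'0] at h2
    linarith
  have hfq' : IntegrableOn (fun y => |f y| ^ q') (ball x₀ t) volume := by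
    refine Integrable.mono' (g := fun y => 1 + |f y| ^ p)
      ((integrableOn_const measure_ball_lt_top.ne).add hfp)
      (aux_aesm_rpow hfm hq'0)
      (Filter.Eventually.of_forall fun y => ?_)
    rw [Real.norm_of_nonneg (Real.rpow_nonneg (abs_nonneg _) _)]
    exact aux_rpow_le_one_add (abs_nonneg (f y)) hq'0.le hq'p
  set NF : ℝ := (∫ y in ball x₀ t, |f y| ^ p) ^ (1/p) with hNF_def
  have hIf0 : 0 ≤ ∫ y in ball x₀ t, |f y| ^ p :=
    integral_nonneg fun y => Real.rpow_nonneg (abs_nonneg _) _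
  have hNF0 : 0 ≤ NF := Real.rpow_nonneg hIf0 _
  have hfhold : (∫ y in ball x₀ t, |f y| ^ q') ^ (1/q') ≤ NF * V t ^ (1 - 1/q - 1/p) := by
    have hpm := aux_power_mean (μ := volume.restrict (ball x₀ t)) (a := q') (c := p) hq'1.le hq'p
      (g := fun y => |f y|) (fun y => abs_nonneg _) hfm hfp
    rw [Measure.restrict_apply_univ] at hpm
    have h0 : 0 ≤ ∫ y in ball x₀ t, |f y| ^ q' :=
      integral_nonneg fun y => Real.rpow_nonneg (abs_nonneg _) _
    have h1 := Real.rpow_le_rpow h0 hpm (show (0:ℝ) ≤ 1/q' by positivity)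
    have h2 : ((∫ y in ball x₀ t, |f y| ^ p) ^ (q'/p) * V t ^ (1 - q'/p)) ^ (1/q')
        = NF * V t ^ (1 - 1/q - 1/p) := by
      rw [Real.mul_rpow (Real.rpow_nonneg hIf0 _) (Real.rpow_nonneg (hVnn t) _),
          ← Real.rpow_mul hIf0, ← Real.rpow_mul (hVnn t)]
      have hqp' : q'/p * (1/q') = 1/p := by
        rw [div_mul_div_comm, mul_one, mul_comm p q', ← div_div, div_self hq'0.ne']
      have hexp : (1 - q'/p) * (1/q') = 1/q' - 1/p := by
        rw [sub_mul, one_mul, hqp']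
      rw [hqp', hexp, hq'inv, hNF_def]
    rw [h2] at h1
    exact h1
  have hstep2 : (∫ y in ball x₀ t, |b y - A t| ^ q) ^ (1/q) ≤ Nb * V t ^ ((1 + lam*q)/q) := by
    have h1 : (∫ y in ball x₀ t, |b y - A t| ^ q) ^ (1/q)
        ≤ (Nb ^ q * V t ^ (1 + lam*q)) ^ (1/q) :=
      Real.rpow_le_rpow (integral_nonneg fun y => Real.rpow_nonneg (abs_nonneg _) q)
        (hCamp t ht) (by positivity)
    have h2 : (Nb ^ q * V t ^ (1 + lam*q)) ^ (1/q) = Nb * V t ^ ((1 + lam*q)/q) := by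
      rw [Real.mul_rpow (Real.rpow_nonneg hNb q) (Real.rpow_nonneg (hVnn t) _),
          ← Real.rpow_mul hNb, mul_one_div, div_self hq0.ne', Real.rpow_one,
          ← Real.rpow_mul (hVnn t), mul_one_div]
    rw [h2] at h1
    exact h1
  have hT1 : (∫ y in ball x₀ t, |b y - A t| * |f y|) ≤ Nb * NF * V t ^ e := by
    have hhold := aux_holder (μ := volume.restrict (ball x₀ t)) hqq'
      (g := fun y => |b y - A t|) (h := fun y => |f y|)
      (fun y => abs_nonneg _) (fun y => abs_nonneg _) (hGm t ht) hfm (hGi t ht) hfq'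
    have hexpeq : (1 + lam*q)/q + (1 - 1/q - 1/p) = e := by
      show _ = 1 + lam - 1/p
      field_simp [hq0.ne', hp0.ne']
      ring
    have hexp : V t ^ ((1 + lam*q)/q) * V t ^ (1 - 1/q - 1/p) = V t ^ e := by
      rw [← Real.rpow_add (hV0 t ht), hexpeq]
    calc (∫ y in ball x₀ t, |b y - A t| * |f y|)
        ≤ (∫ y in ball x₀ t, |b y - A t| ^ q) ^ (1/q)
          * (∫ y in ball x₀ t, |f y| ^ q') ^ (1/q') := hhold
      _ ≤ (Nb * V t ^ ((1 + lam*q)/q)) * (NF * V t ^ (1 - 1/q - 1/p)) := by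
          refine mul_le_mul hstep2 hfhold ?_ ?_
          · exact Real.rpow_nonneg (integral_nonneg fun y =>
              Real.rpow_nonneg (abs_nonneg _) _) _
          · exact mul_nonneg hNb (Real.rpow_nonneg (hVnn t) _)
      _ = Nb * NF * (V t ^ ((1 + lam*q)/q) * V t ^ (1 - 1/q - 1/p)) := by ring
      _ = Nb * NF * V t ^ e := by rw [hexp]
  have hfL1 : (∫ y in ball x₀ t, |f y|) ≤ NF * V t ^ (1 - 1/p) := by
    have hpm1 := aux_power_mean (μ := volume.restrict (ball x₀ t)) (a := 1) (c := p) le_rfl hp.le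
      (g := fun y => |f y|) (fun y => abs_nonneg _) hfm hfp
    rw [Measure.restrict_apply_univ] at hpm1
    simp only [Real.rpow_one] at hpm1
    exact hpm1
  have hprod : IntegrableOn (fun y => |b y - A t| * |f y|) (ball x₀ t) volume := by
    refine Integrable.mono' (g := fun y => |b y - A t| ^ q / q + |f y| ^ q' / q')
      ?_ ((hGm t ht).mul hfm) (Filter.Eventually.of_forall fun y => ?_)
    · exact ((hGi t ht).div_const q).add (hfq'.div_const q')
    · rw [Real.norm_of_nonneg (mul_nonneg (abs_nonneg _) (abs_nonneg _))]
      have hy := Real.young_inequality (|b y - A t|) (|f y|) hqq'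
      rwa [abs_abs, abs_abs] at hy
  have hconstf : IntegrableOn (fun y => |A t - A r| * |f y|) (ball x₀ t) volume :=
    hfI1.const_mul _
  have hsplit : (∫ y in ball x₀ t, |b y - A r| * |f y|)
      ≤ ∫ y in ball x₀ t, (|b y - A t| * |f y| + |A t - A r| * |f y|) := by
    refine integral_mono_of_nonneg
      (Filter.Eventually.of_forall fun y => mul_nonneg (abs_nonneg _) (abs_nonneg _))
      (hprod.add hconstf) (Filter.Eventually.of_forall fun y => ?_)
    have h1 : |b y - A r| ≤ |b y - A t| + |A t - A r| := by
      have h0 : b y - A r = (b y - A t) + (A t - A r) := by ring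
      rw [h0]
      exact abs_add_le _ _
    show |b y - A r| * |f y| ≤ |b y - A t| * |f y| + |A t - A r| * |f y|
    calc |b y - A r| * |f y| ≤ (|b y - A t| + |A t - A r|) * |f y| :=
          mul_le_mul_of_nonneg_right h1 (abs_nonneg _)
      _ = |b y - A t| * |f y| + |A t - A r| * |f y| := by ring
  have hVe2eq : lam + (1 - 1/p) = e := by
    show _ = 1 + lam - 1/p
    ring
  have hVe2 : V t ^ lam * V t ^ (1 - 1/p) = V t ^ e := by
    rw [← Real.rpow_add (hV0 t ht), hVe2eq]
  have hVte : V t ^ e = cE ^ e * t ^ ((n:ℝ)*lam - (n:ℝ)/p + (n:ℝ)) := by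
    rw [hVf t ht, Real.mul_rpow (by positivity) hcE.le, mul_comm]
    congr 1
    rw [← Real.rpow_natCast t n, ← Real.rpow_mul ht.le]
    congr 1
    show (n:ℝ) * (1 + lam - 1/p) = _
    ring
  have hcount : 1 + 2^n * (K:ℝ) ≤ (1 + Real.log (t/r)) * (1 + 2^n / Real.log 2) := by
    have h2n : (0:ℝ) < 2^n := by positivity
    have h1 : 2^n * (K:ℝ) ≤ (1 + Real.log (t/r)) * (2^n / Real.log 2) := by
      calc 2^n * (K:ℝ) ≤ 2^n * ((1 + Real.log (t/r)) / Real.log 2) :=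
            mul_le_mul_of_nonneg_left hKle h2n.le
        _ = (1 + Real.log (t/r)) * (2^n / Real.log 2) := by ring
    nlinarith
  calc (∫ y in ball x₀ t, |b y - A r| * |f y|)
      ≤ ∫ y in ball x₀ t, (|b y - A t| * |f y| + |A t - A r| * |f y|) := hsplit
    _ = (∫ y in ball x₀ t, |b y - A t| * |f y|)
        + |A t - A r| * ∫ y in ball x₀ t, |f y| := by
        rw [integral_add hprod hconstf, integral_const_mul]
    _ ≤ Nb * NF * V t ^ e
        + ((K:ℝ) * (2^n * (Nb * V t ^ lam))) * (NF * V t ^ (1 - 1/p)) := by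
        refine add_le_add hT1 (mul_le_mul hAtr hfL1
          (integral_nonneg fun y => abs_nonneg _) ?_)
        exact mul_nonneg (Nat.cast_nonneg K) (mul_nonneg (by positivity)
          (mul_nonneg hNb (Real.rpow_nonneg (hVnn t) _)))
    _ = Nb * NF * V t ^ e * (1 + 2^n * (K:ℝ)) := by
        rw [← hVe2]
        ring
    _ ≤ Nb * NF * V t ^ e * ((1 + Real.log (t/r)) * (1 + 2^n / Real.log 2)) := by
        refine mul_le_mul_of_nonneg_left hcount ?_
        exact mul_nonneg (mul_nonneg hNb hNF0) (Real.rpow_nonneg (hVnn t) _)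
    _ = cE ^ e * (1 + 2^n / Real.log 2) * Nb * (1 + Real.log (t/r))
        * t ^ ((n:ℝ)*lam - (n:ℝ)/p + (n:ℝ)) * NF := by
        rw [hVte]
        ring
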